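/- arXiv:2302.00993 — 4 statements merged into one kernel-verified Lean document; each statement's English description precedes it below -/
import Mathlib

section
/- Fix pairwise disjoint finite observed index sets V_1,…,V_m with union V, a finite latent index set H partitioned as H = L ∪ I_1 ∪ ⋯ ∪ I_m with S_e = L ∪ I_e, a mixing support pattern D_VH ⊆ V × H such that (v,k) ∉ D_VH whenever v ∈ V_e and k ∉ S_e, and a latent edge pattern D_HH ⊆ H × H that is acyclic (as a directed graph on H, edges k → h for (h,k) ∈ D_HH) and contains no pairs between L and H∖L and no pairs between I_e and I_f for e ≠ f. Let Im(φ) = { G(I−A)^{-1} : G ∈ ℝ^{V×H} with G_{v,k} = 0 for (v,k) ∉ D_VH, A ∈ ℝ^{H×H} with A_{h,k} = 0 for (h,k) ∉ D_HH }. Let B ∈ Im(φ) be rank-faithful, meaning that for every Y ⊆ V and every W ⊆ L, rank(B_{Y,W}) ≥ rank(B'_{Y,W}) for all B' ∈ Im(φ), and assume that no row of the submatrix B_{V,L} is the zero row. Then for any two distinct v, w ∈ V: rank(B_{{v,w},L}) = 1 if and only if there exists k ∈ L such that { j ∈ L : (v,j) ∈ D_VH } = {k} and { j ∈ L : (w,j)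 ∈ D_VH } = {k}, i.e. v and w are both partial pure children of the same shared node k. -/
/-!
If `v` is a partial pure child of the shared node `k`, then, because `(1 - A)⁻¹` has no entries
from domain-specific rows into shared columns, the shared part of row `v` of `B` is
`G v k • ((1 - A)⁻¹) k`; two such rows are proportional. Conversely, a nonzero shared part of
row `v` forces `v` to have a shared parent, and if `v, w` have distinct shared parents `a ≠ b`,
the matrix `G' = E_{va} + E_{wb}` (with `A = 0`) lies in `Im(φ)` and has rank `2` on
`{v, w} × L`; by rank faithfulness so has `B`.
-/

/-- The image of the parametrization map `φ : (G, A) ↦ G (1 - A)⁻¹`, where `G` is supported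
on the mixing pattern `DVH` and `A` on the latent edge pattern `DHH`. -/
def Imphi {V H : Type} [Fintype H] [DecidableEq H]
    (DVH : V → H → Prop) (DHH : H → H → Prop) : Set (Matrix V H ℝ) :=
  { B | ∃ (G : Matrix V H ℝ) (A : Matrix H H ℝ),
      (∀ v k, ¬ DVH v k → G v k = 0) ∧
      (∀ h k, ¬ DHH h k → A h k = 0) ∧
      B = G * (1 - A)⁻¹ }

open Matrix

namespace Matrix

variable {m n ι R : Type*}

theorem BlockTriangular.nonsing_inv {α : Type*} [Fintype m] [DecidableEq m] [LinearOrder α]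
    [CommRing R] {M : Matrix m m R} {b : m → α} (hM : M.BlockTriangular b) :
    M⁻¹.BlockTriangular b := by
  by_cases h : IsUnit M.det
  · let _ := M.invertibleOfIsUnitDet h
    exact blockTriangular_inv_of_blockTriangular hM
  · rw [nonsing_inv_apply_not_isUnit M h]
    exact blockTriangular_zero

variable [Fintype n]

theorem card_le_rank_of_det_submatrix_ne_zero [CommRing R] [IsDomain R] [Fintype ι]
    [DecidableEq ι] (A : Matrix m n R) (r : ι → m) (c : ι → n)
    (h : (A.submatrix r c).det ≠ 0) : Fintype.card ι ≤ A.rank :=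
  (rank_of_det_ne_zero h).symm.le.trans (rank_submatrix_le A r c)

theorem one_le_rank_of_ne_zero [CommRing R] [IsDomain R] {A : Matrix m n R} {i : m} {j : n}
    (h : A i j ≠ 0) : 1 ≤ A.rank :=
  card_le_rank_of_det_submatrix_ne_zero (ι := Unit) A (fun _ => i) (fun _ => j)
    (by rwa [det_unique])

theorem rank_submatrix_pair_le [CommSemiring R] [StrongRankCondition R] [DecidableEq m]
    {n' : Type*} [Fintype n'] (A : Matrix m n R) (v w : m) (c : n' → n) :
    (A.submatrix (fun y : ({v, w} : Finset m) => (y : m)) c).rank ≤ (of ![A v, A w]).rank := by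
  calc _ = ((of ![A v, A w]).submatrix
        (fun y : ({v, w} : Finset m) => if (y : m) = v then 0 else 1) c).rank := by
          congr 1
          ext ⟨y, hy⟩ j
          rcases Finset.mem_insert.mp hy with rfl | hy
          · simp
          · obtain rfl := Finset.mem_singleton.mp hy
            by_cases hyv : y = v <;> simp [hyv]
    _ ≤ _ := rank_submatrix_le _ _ _

end Matrix

theorem exists_unique_common_of_forall_eq {α : Type*} {S P Q : α → Prop}
    (hP : ∃ a, S a ∧ P a) (hQ : ∃ b, S b ∧ Q b)
    (h : ∀ a b, S a → S b → P a → Q b → a = b) :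
    ∃ k, S k ∧ (∀ j, S j → (P j ↔ j = k)) ∧ (∀ j, S j → (Q j ↔ j = k)) := by
  obtain ⟨a, ha, hPa⟩ := hP
  obtain ⟨b, hb, hQb⟩ := hQ
  obtain rfl := h a b ha hb hPa hQb
  exact ⟨a, ha, fun j hj => ⟨fun hPj => h j a hj ha hPj hQb, fun hja => hja ▸ hPa⟩,
    fun j hj => ⟨fun hQj => (h a j ha hj hPa hQj).symm, fun hja => hja ▸ hQb⟩⟩

section LatentModel

variable {V H ι R : Type*} [CommRing R] {blk : H → Option ι}

/- Block-triangularity for `(blk ·).isSome`, ordered by `false < true`, says exactly that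
there are no entries from a domain-specific row into a shared column. -/
theorem blockTriangular_inv_one_sub [Fintype H] [DecidableEq H] {DHH : H → H → Prop}
    {A : Matrix H H R} (hDHH : ∀ h k, DHH h k → blk h = blk k)
    (hA : ∀ h k, ¬ DHH h k → A h k = 0) :
    (1 - A)⁻¹.BlockTriangular (fun k => (blk k).isSome) := by
  refine (blockTriangular_one.sub fun h k hlt => hA h k fun hD => ?_).nonsing_inv
  simp [hDHH h k hD] at hlt

variable {M : Matrix H H R}

theorem entry_eq_zero_of_shared_col (hM : M.BlockTriangular (fun k => (blk k).isSome))
    {j l : H} (hj : blk j ≠ none) (hl : blk l = none) : M j l = 0 :=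
  hM (by simp [hl, Option.isSome_iff_ne_none.mpr hj])

variable [Fintype H] {G : Matrix V H R}

theorem mul_apply_eq_of_shared_pure (hM : M.BlockTriangular (fun k => (blk k).isSome))
    {x : V} {k l : H} (hl : blk l = none) (hpure : ∀ j, blk j = none → j ≠ k → G x j = 0) :
    (G * M) x l = G x k * M k l := by
  rw [mul_apply, Finset.sum_eq_single k (fun j _ hjk => ?_) (by simp)]
  by_cases hj : blk j = none
  · rw [hpure j hj hjk, zero_mul]
  · rw [entry_eq_zero_of_shared_col hM hj hl, mul_zero]

theorem exists_shared_ne_zero_of_mul_apply_ne_zero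
    (hM : M.BlockTriangular (fun k => (blk k).isSome)) {x : V} {l : H} (hl : blk l = none)
    (hx : (G * M) x l ≠ 0) : ∃ j, blk j = none ∧ G x j ≠ 0 := by
  obtain ⟨j, -, hj⟩ := Finset.exists_ne_zero_of_sum_ne_zero hx
  refine ⟨j, by_contra fun hjL => ?_, left_ne_zero_of_mul hj⟩
  exact right_ne_zero_of_mul hj (entry_eq_zero_of_shared_col hM hjL hl)

end LatentModel

theorem mem_Imphi_of_support {V H : Type} [Fintype H] [DecidableEq H]
    {DVH : V → H → Prop} (DHH : H → H → Prop) {G : Matrix V H ℝ}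
    (hG : ∀ v k, ¬ DVH v k → G v k = 0) : G ∈ Imphi DVH DHH :=
  ⟨G, 0, hG, fun _ _ _ => rfl, by rw [sub_zero, inv_one, Matrix.mul_one]⟩

theorem two_le_rank_pair_of_rank_faithful {V H ι : Type} [Fintype H] [DecidableEq H]
    [DecidableEq V] [DecidableEq ι] {blk : H → Option ι} {DVH : V → H → Prop}
    {DHH : H → H → Prop} {B : Matrix V H ℝ}
    (hfaithful : ∀ (Y : Finset V) (W : Finset H), (∀ k ∈ W, blk k = none) →
      ∀ B' ∈ Imphi DVH DHH,
        (B'.submatrix (fun y : Y => (y : V)) (fun w : W => (w : H))).rank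
          ≤ (B.submatrix (fun y : Y => (y : V)) (fun w : W => (w : H))).rank)
    {v w : V} (hvw : v ≠ w) {a b : H} (ha : blk a = none) (hb : blk b = none) (hab : a ≠ b)
    (hva : DVH v a) (hwb : DVH w b) :
    2 ≤ (of ![fun k : {k : H // blk k = none} => B v k,
      fun k : {k : H // blk k = none} => B w k]).rank := by
  set W := Finset.univ.filter fun k => blk k = none
  have hW : ∀ k ∈ W, blk k = none := fun k hk => (Finset.mem_filter.mp hk).2
  set G' : Matrix V H ℝ := single v a 1 + single w b 1
  have hG' : G' ∈ Imphi DVH DHH := mem_Imphi_of_support DHH fun x j hxj => by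
    simp only [G', Matrix.add_apply, Matrix.single_apply]
    split_ifs <;> simp_all
  have hG'rank : 2 ≤ (G'.submatrix (fun y : ({v, w} : Finset V) => (y : V))
      (fun k : W => (k : H))).rank :=
    card_le_rank_of_det_submatrix_ne_zero (ι := Fin 2) _ ![⟨v, by simp⟩, ⟨w, by simp⟩]
      ![⟨a, by simp [W, ha]⟩, ⟨b, by simp [W, hb]⟩]
      (by simp [det_fin_two, G', hvw, hab, hvw.symm, hab.symm])
  calc 2 ≤ _ := hG'rank.trans (hfaithful _ W hW G' hG')
    _ ≤ _ := rank_submatrix_pair_le (fun x (k : {k : H // blk k = none}) => B x k) v w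
      (fun k : W => ⟨k, hW k k.2⟩)

theorem stmt2_general {V H : Type} [Fintype H] [DecidableEq H]
    (m : ℕ) (blk : H → Option (Fin m))
    (DVH : V → H → Prop) (DHH : H → H → Prop)
    -- no latent edges between the shared block and domain-specific blocks, nor between
    -- different domain-specific blocks
    (hDHH : ∀ h k, DHH h k → blk h = blk k)
    (B : Matrix V H ℝ) (hB : B ∈ Imphi DVH DHH)
    -- rank faithfulness: B attains the maximal rank on every (Y, W ⊆ L) submatrix
    (hfaithful : ∀ (Y : Finset V) (W : Finset H), (∀ k ∈ W, blk k = none) →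
      ∀ B' ∈ Imphi DVH DHH,
        (B'.submatrix (fun y : Y => (y : V)) (fun w : W => (w : H))).rank
          ≤ (B.submatrix (fun y : Y => (y : V)) (fun w : W => (w : H))).rank)
    -- no zero row in B_{V,L}
    (hnozero : ∀ v : V, ∃ k, blk k = none ∧ B v k ≠ 0) :
    ∀ v w : V, v ≠ w →
      ((Matrix.of ![fun k : {k : H // blk k = none} => B v k,
          fun k : {k : H // blk k = none} => B w k]).rank = 1 ↔
        ∃ k, blk k = none ∧
          (∀ j, blk j = none → (DVH v j ↔ j = k)) ∧
          (∀ j, blk j = none → (DVH w j ↔ j = k))) := by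
  classical
  obtain ⟨G, A, hG, hA, rfl⟩ := hB
  have hM := blockTriangular_inv_one_sub hDHH hA
  have hparent : ∀ x, ∃ j, blk j = none ∧ DVH x j := fun x => by
    obtain ⟨l, hl, hx⟩ := hnozero x
    obtain ⟨j, hj, hGj⟩ := exists_shared_ne_zero_of_mul_apply_ne_zero hM hl hx
    exact ⟨j, hj, by_contra fun h => hGj (hG x j h)⟩
  intro v w hvw
  constructor
  · intro hrank
    refine exists_unique_common_of_forall_eq (hparent v) (hparent w)
      fun a b ha hb hva hwb => by_contra fun hab => ?_
    have := two_le_rank_pair_of_rank_faithful hfaithful hvw ha hb hab hva hwb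
    omega
  · rintro ⟨k, hk, hv, hw⟩
    have hrow : ∀ x, (∀ j, blk j = none → (DVH x j ↔ j = k)) →
        ∀ l : {l : H // blk l = none}, (G * (1 - A)⁻¹) x l = G x k * (1 - A)⁻¹ k l :=
      fun x hx l => mul_apply_eq_of_shared_pure hM l.2 fun j hj hjk =>
        hG x j (mt (hx j hj).1 hjk)
    have hfactor : of ![fun l : {l : H // blk l = none} => (G * (1 - A)⁻¹) v l,
        fun l : {l : H // blk l = none} => (G * (1 - A)⁻¹) w l]
        = vecMulVec ![G v k, G w k] fun l : {l : H // blk l = none} => (1 - A)⁻¹ k l := by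
      ext i l
      fin_cases i <;> simp [vecMulVec_apply, hrow v hv, hrow w hw]
    obtain ⟨l, hl, hvl⟩ := hnozero v
    exact le_antisymm (hfactor ▸ rank_vecMulVec_le _ _)
      (one_le_rank_of_ne_zero (i := 0) (j := ⟨l, hl⟩) hvl)

/-- **Rank-1 characterization of partial pure children (Lemma 4.1).**
Observed indices `V` are assigned to domains by `dom`, latent indices `H` to blocks by
`blk` (`none` = shared block `L`, `some e` = domain-specific block `I_e`).  For a
rank-faithful `B ∈ Im(φ)` whose shared columns have no zero row, two distinct observed
rows restricted to the shared columns have rank exactly `1` iff both are partial pure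
children of one and the same shared latent node. -/
theorem stmt2 {V H : Type} [Fintype V] [Fintype H] [DecidableEq V] [DecidableEq H]
    (m : ℕ) (dom : V → Fin m) (blk : H → Option (Fin m))
    (DVH : V → H → Prop) (DHH : H → H → Prop)
    -- mixing support respects the multi-domain structure
    (hDVH : ∀ v k, DVH v k → blk k = none ∨ blk k = some (dom v))
    -- the latent edge pattern is acyclic (edges k → h for pairs (h,k) ∈ DHH)
    (hacyclic : ∀ h, ¬ Relation.TransGen (fun k h' => DHH h' k) h h)
    -- no latent edges between the shared block and domain-specific blocks, nor between
    -- different domain-specific blocks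
    (hDHH : ∀ h k, DHH h k → blk h = blk k)
    (B : Matrix V H ℝ) (hB : B ∈ Imphi DVH DHH)
    -- rank faithfulness: B attains the maximal rank on every (Y, W ⊆ L) submatrix
    (hfaithful : ∀ (Y : Finset V) (W : Finset H), (∀ k ∈ W, blk k = none) →
      ∀ B' ∈ Imphi DVH DHH,
        (B'.submatrix (fun y : Y => (y : V)) (fun w : W => (w : H))).rank
          ≤ (B.submatrix (fun y : Y => (y : V)) (fun w : W => (w : H))).rank)
    -- no zero row in B_{V,L}
    (hnozero : ∀ v : V, ∃ k, blk k = none ∧ B v k ≠ 0) :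
    ∀ v w : V, v ≠ w →
      ((Matrix.of ![fun k : {k : H // blk k = none} => B v k,
          fun k : {k : H // blk k = none} => B w k]).rank = 1 ↔
        ∃ k, blk k = none ∧
          (∀ j, blk j = none → (DVH v j ↔ j = k)) ∧
          (∀ j, blk j = none → (DVH w j ↔ j = k))) :=
  stmt2_general m blk DVH DHH hDHH B hB hfaithful hnozero
end

section
/- Let p ≥ 1 and let r be a relation on {1,…,p} (the edge set of a DAG, r i j meaning there is an edge i → j) satisfying the topological-order condition: r i j implies i < j. Let M ∈ ℝ^{p×p} be lower triangular with M_{ii} ≠ 0 for all i, and such that for all i ≠ j: M_{ij} ≠ 0 if and only if there is a directed path from j to i, i.e. the transitive closure of r relates j to i. For permutations σ_1, σ_2 of {1,…,p}, let Q_{σ} denote the permutation matrix with entries (Q_σ)_{ij} = 1 if j = σ(i) and 0 otherwise. Then Q_{σ_1} M Q_{σ_2} is lower triangular if and only if σ_2 = σ_1^{-1} and σ_2 is consistent with the DAG, i.e. σ_2(i) < σ_2(j) for every pair with r i j. -/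
/-- The permutation matrix of `σ`, with entries `(Q_σ)_{ij} = 1` iff `j = σ i`. -/
def permMatrix {p : ℕ} (σ : Equiv.Perm (Fin p)) : Matrix (Fin p) (Fin p) ℝ :=
  Matrix.of fun i j => if j = σ i then 1 else 0

lemma permMatrix_entry {p : ℕ} (σ1 σ2 : Equiv.Perm (Fin p)) (M : Matrix (Fin p) (Fin p) ℝ)
    (i j : Fin p) : (permMatrix σ1 * M * permMatrix σ2) i j = M (σ1 i) (σ2⁻¹ j) := by
  simp only [permMatrix, Matrix.mul_apply, Matrix.of_apply]
  have h1 : ∀ k : Fin p, (∑ l, (if l = σ1 i then (1:ℝ) else 0) * M l k) = M (σ1 i) k := by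
    intro k
    simp [ite_mul]
  simp only [h1]
  have h2 : ∀ k : Fin p, (if j = σ2 k then (1:ℝ) else 0) = if k = σ2⁻¹ j then 1 else 0 := by
    intro k
    have : (j = σ2 k) ↔ (k = σ2⁻¹ j) := by
      constructor
      · intro h; simp [h]
      · intro h; simp [h]
    simp [this]
  simp only [h2, mul_ite, mul_one, mul_zero, Finset.sum_ite_eq', Finset.mem_univ, if_true]

lemma perm_le_eq {p : ℕ} (f g : Equiv.Perm (Fin p)) (h : ∀ a, f a ≤ g a) : f = g := by
  by_contra hne
  have : ∃ a, f a ≠ g a := by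
    by_contra h'
    push_neg at h'
    exact hne (Equiv.ext h')
  obtain ⟨a, ha⟩ := this
  have hlt : Finset.univ.sum (fun x => (f x : ℕ)) < Finset.univ.sum (fun x => (g x : ℕ)) := by
    apply Finset.sum_lt_sum (fun x _ => by exact_mod_cast h x)
    exact ⟨a, Finset.mem_univ a, by exact_mod_cast lt_of_le_of_ne (h a) ha⟩
  have heq : Finset.univ.sum (fun x => ((f x : Fin p) : ℕ)) =
      Finset.univ.sum (fun x => ((g x : Fin p) : ℕ)) := by
    rw [Equiv.sum_comp f (fun x => (x : ℕ)), Equiv.sum_comp g (fun x => (x : ℕ))]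
  omega

/-- **Lemma A.2.**  Let `r` be the edge relation of a DAG on `{1,…,p}` compatible with the
order (`r i j → i < j`), and let `M` be lower triangular with nonzero diagonal whose
off-diagonal support is exactly the directed-path (transitive closure) relation:
`M i j ≠ 0 ↔` there is a directed path `j → ⋯ → i`.  Then `Q_{σ₁} M Q_{σ₂}` is lower
triangular iff `σ₂ = σ₁⁻¹` and `σ₂` is consistent with the DAG. -/
theorem stmt4 (p : ℕ) (hp : 1 ≤ p) (r : Fin p → Fin p → Prop)
    (hr : ∀ i j, r i j → i < j)
    (M : Matrix (Fin p) (Fin p) ℝ)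
    (hlower : ∀ i j : Fin p, i < j → M i j = 0)
    (hdiag : ∀ i, M i i ≠ 0)
    (hpath : ∀ i j : Fin p, i ≠ j → (M i j ≠ 0 ↔ Relation.TransGen r j i))
    (σ1 σ2 : Equiv.Perm (Fin p)) :
    (∀ i j : Fin p, i < j → (permMatrix σ1 * M * permMatrix σ2) i j = 0) ↔
      (σ2 = σ1⁻¹ ∧ ∀ i j, r i j → σ2 i < σ2 j) := by
  simp only [permMatrix_entry]
  constructor
  · intro h
    -- first: σ2⁻¹ = σ1, i.e. ∀ a, σ2⁻¹⁻¹ a ≤ σ1⁻¹ a then equality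
    have key : ∀ i j : Fin p, σ1 i = σ2⁻¹ j → j ≤ i := by
      intro i j hij
      by_contra hlt
      push_neg at hlt
      exact hdiag (σ1 i) (by have := h i j hlt; rw [← hij] at this; exact this)
    have hcomp : σ2 * σ1 = 1 := by
      apply perm_le_eq
      intro a
      have := key a (σ2 (σ1 a)) (by simp)
      simpa using this
    have hσ : σ1 = σ2⁻¹ := by
      exact eq_inv_of_mul_eq_one_right hcomp
    have hσ2 : σ2 = σ1⁻¹ := by rw [hσ]; simp
    refine ⟨hσ2, ?_⟩
    intro i j hrij
    have hij := hr i j hrij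
    have hne : σ2 i ≠ σ2 j := fun e => absurd (σ2.injective e) (ne_of_lt hij)
    rcases lt_or_gt_of_ne hne with hlt | hgt
    · exact hlt
    · exfalso
      have hz := h (σ2 j) (σ2 i) hgt
      rw [hσ2] at hz
      simp at hz
      exact (hpath j i (ne_of_gt hij) |>.mpr (Relation.TransGen.single hrij)) hz
  · rintro ⟨hσ2, hcons⟩ i j hij
    rw [hσ2]
    simp only [inv_inv]
    by_contra hMz
    have hne : σ1 i ≠ σ1 j := fun e => absurd (σ1.injective e) (ne_of_lt hij)
    have htg := (hpath (σ1 i) (σ1 j) hne).mp hMz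
    -- TransGen r (σ1 j) (σ1 i); consistency gives σ2 (σ1 j) < σ2 (σ1 i), i.e. j < i
    have mono : ∀ a b, Relation.TransGen r a b → σ2 a < σ2 b := by
      intro a b hab
      induction hab with
      | single h1 => exact hcons _ _ h1
      | tail _ h2 ih => exact ih.trans (hcons _ _ h2)
    have := mono _ _ htg
    rw [hσ2] at this
    simp at this
    omega
end

section
/- Let ℓ ≥ 1 and let A ∈ ℝ^{ℓ×ℓ} be strictly lower triangular; let r be the relation on {1,…,ℓ} with r j i if and only if A_{ij} ≠ 0 (an edge j → i). Assume the faithfulness property: for all i ≠ j, ((I−A)^{-1})_{ij} ≠ 0 if and only if the transitive closure of r relates j to i (there is a directed path j → ⋯ → i). Let Λ be an invertible diagonal matrix, D_0 a diagonal matrix with diagonal entries in {±1}, and Q_1, Q_2 permutation matrices, and set B* = Q_1 Λ (I−A)^{-1} D_0 Q_2. Suppose R_1, R_2 are permutation matrices such that W := R_1 B* R_2 is lower triangular. Let W̃ be obtained from W by multiplying each column by the sign of its diagonal entry, and let W' be obtained from W̃ by dividing each row by its (then positive) diagonal entry. Then there exist a permutation σ of {1,…,ℓ} consistent with the DAG of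 A (i.e. A_{ij} ≠ 0 implies σ(j) < σ(i)) and a diagonal matrix D' with diagonal entries in {±1} such that I − (W')^{-1} = D' Q_σ^T A Q_σ D', where Q_σ is the permutation matrix of σ. Moreover, if all diagonal entries of Λ are positive, then D' = I, so I − (W')^{-1} = Q_σ^T A Q_σ. -/
/-!
Write `M = (1 - A)⁻¹`, a unit lower triangular matrix. Up to invertible diagonal scalings,
`W = R₁ B* R₂` is `M` with its rows permuted by some `π` and its columns by some `κ`. Since `W` is
invertible and lower triangular, its diagonal entries `M (π i) (κ i)` are nonzero, so `κ i ≤ π i`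
for every `i`, which forces `κ = π`. Then `W` is a diagonal scaling of `(1 - A_π)⁻¹`, where
`A_π = A.submatrix π π`; being the inverse of a lower triangular matrix, `1 - A_π` is lower
triangular, i.e. `π⁻¹` is consistent with the DAG of `A`. The two normalizations turn the scalings
into the conjugation by `D' = diagonal (sign ∘ λ ∘ π)`, and `1 - (D' (1 - A_π)⁻¹ D')⁻¹ = D' A_π D'`.
-/

open Matrix

theorem Equiv.Perm.eq_of_forall_le {m : ℕ} {e f : Equiv.Perm (Fin m)} (h : ∀ i, e i ≤ f i) :
    e = f := by
  have hsum : ∑ i, (e i : ℕ) = ∑ i, (f i : ℕ) := by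
    rw [Equiv.sum_comp e (fun j : Fin m => (j : ℕ)), Equiv.sum_comp f (fun j : Fin m => (j : ℕ))]
  have hval := (Finset.sum_eq_sum_iff_of_le fun i _ => Fin.le_iff_val_le_val.1 (h i)).1 hsum
  exact Equiv.ext fun i => Fin.ext (hval i (Finset.mem_univ i))

namespace Matrix

variable {K n : Type*} [Field K]

theorem submatrix_diagonal_mul_mul_diagonal [Fintype n] [DecidableEq n] (a b : n → K)
    (X : Matrix n n K) (e f : Equiv.Perm n) :
    (diagonal a * X * diagonal b).submatrix e f
      = diagonal (a ∘ e) * X.submatrix e f * diagonal (b ∘ f) := by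
  ext i j
  simp [diagonal_mul, mul_diagonal]

theorem one_sub_submatrix [DecidableEq n] (A : Matrix n n K) (e : Equiv.Perm n) :
    (1 - A).submatrix e e = 1 - A.submatrix e e := by
  ext i j
  simp [one_apply]

theorem inv_one_sub_submatrix [Fintype n] [DecidableEq n] (A : Matrix n n K) (e : Equiv.Perm n) :
    (1 - A)⁻¹.submatrix e e = (1 - A.submatrix e e)⁻¹ := by
  rw [← one_sub_submatrix, inv_submatrix_equiv]

theorem one_sub_inv_diagonal_mul_inv_one_sub_mul_diagonal [Fintype n] [DecidableEq n]
    {s : n → K} (hs : ∀ i, s i * s i = 1) {B : Matrix n n K} (hB : IsUnit (1 - B).det) :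
    1 - (diagonal s * (1 - B)⁻¹ * diagonal s)⁻¹ = diagonal s * B * diagonal s := by
  have hss : diagonal s * diagonal s = 1 := by
    rw [diagonal_mul_diagonal, ← diagonal_one]
    exact congrArg diagonal (funext hs)
  have hinv : (diagonal s * (1 - B)⁻¹ * diagonal s)⁻¹ = diagonal s * (1 - B) * diagonal s := by
    refine inv_eq_left_inv ?_
    calc diagonal s * (1 - B) * diagonal s * (diagonal s * (1 - B)⁻¹ * diagonal s)
        = diagonal s * ((1 - B) * (diagonal s * diagonal s) * (1 - B)⁻¹) * diagonal s := by
          simp only [Matrix.mul_assoc]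
      _ = 1 := by rw [hss, Matrix.mul_one, mul_nonsing_inv _ hB, Matrix.mul_one, hss]
  rw [hinv, Matrix.mul_sub, Matrix.sub_mul, Matrix.mul_one, hss, sub_sub_cancel]

theorem BlockTriangular.inv [Fintype n] [DecidableEq n] {α : Type*} [LinearOrder α]
    {M : Matrix n n K} {b : n → α} (hM : M.BlockTriangular b) : M⁻¹.BlockTriangular b := by
  by_cases h : IsUnit M.det
  · have := M.invertibleOfIsUnitDet h
    exact blockTriangular_inv_of_blockTriangular hM
  · rw [nonsing_inv_apply_not_isUnit _ h]
    exact blockTriangular_zero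

section LowerTriangular

variable [LinearOrder n]

theorem isLowerTriangular_of_diagonal_mul_mul_diagonal [Fintype n] [DecidableEq n]
    {a b : n → K} {X : Matrix n n K} (ha : ∀ i, a i ≠ 0) (hb : ∀ i, b i ≠ 0)
    (h : (diagonal a * X * diagonal b).IsLowerTriangular) : X.IsLowerTriangular := by
  intro i j hij
  simpa [diagonal_mul, mul_diagonal, ha i, hb j] using h hij

theorem IsLowerTriangular.mul_apply_self [Fintype n] {M N : Matrix n n K}
    (hM : M.IsLowerTriangular) (hN : N.IsLowerTriangular) (i : n) :
    (M * N) i i = M i i * N i i := by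
  rw [mul_apply, Fintype.sum_eq_single i]
  intro k hk
  rcases hk.lt_or_gt with hlt | hgt
  · rw [hN hlt, mul_zero]
  · rw [hM hgt, zero_mul]

theorem IsLowerTriangular.inv_apply_self [Fintype n] [DecidableEq n] {M : Matrix n n K}
    (hM : M.IsLowerTriangular) (h : IsUnit M.det) (i : n) : M⁻¹ i i = (M i i)⁻¹ := by
  have := IsLowerTriangular.mul_apply_self (BlockTriangular.inv hM) hM i
  rw [nonsing_inv_mul _ h, one_apply_eq] at this
  exact eq_inv_of_mul_eq_one_left this.symm

theorem IsLowerTriangular.apply_self_ne_zero [Fintype n] [DecidableEq n] {M : Matrix n n K}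
    (hM : M.IsLowerTriangular) (h : IsUnit M) (i : n) : M i i ≠ 0 := by
  rw [isUnit_iff_isUnit_det, det_of_isLowerTriangular _ hM, isUnit_iff_ne_zero] at h
  exact Finset.prod_ne_zero_iff.1 h i (Finset.mem_univ i)

theorem IsLowerTriangular.eq_of_isLowerTriangular_submatrix {m : ℕ}
    {M : Matrix (Fin m) (Fin m) K} (hM : M.IsLowerTriangular) (hunit : IsUnit M)
    {e f : Equiv.Perm (Fin m)} (h : (M.submatrix e f).IsLowerTriangular) : e = f := by
  have hdiag : ∀ i, M (e i) (f i) ≠ 0 :=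
    h.apply_self_ne_zero ((isUnit_submatrix_equiv e f).2 hunit)
  exact (Equiv.Perm.eq_of_forall_le fun i => not_lt.1 fun hlt => hdiag i (hM hlt)).symm

theorem isLowerTriangular_one_sub [DecidableEq n] {A : Matrix n n K}
    (hA : ∀ i j, i ≤ j → A i j = 0) : (1 - A).IsLowerTriangular := by
  intro i j hij
  have hij : i < j := hij
  simp [hij.ne, hA i j hij.le]

theorem one_sub_apply_self [DecidableEq n] {A : Matrix n n K}
    (hA : ∀ i j, i ≤ j → A i j = 0) (i : n) : (1 - A) i i = 1 := by
  simp [hA i i le_rfl]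

theorem det_one_sub [Fintype n] [DecidableEq n] {A : Matrix n n K}
    (hA : ∀ i j, i ≤ j → A i j = 0) : (1 - A).det = 1 := by
  simp [det_of_isLowerTriangular _ (isLowerTriangular_one_sub hA), one_sub_apply_self hA]

theorem inv_one_sub_apply_self [Fintype n] [DecidableEq n] {A : Matrix n n K}
    (hA : ∀ i j, i ≤ j → A i j = 0) (i : n) : (1 - A)⁻¹ i i = 1 := by
  rw [(isLowerTriangular_one_sub hA).inv_apply_self (by simp [det_one_sub hA]),
    one_sub_apply_self hA, inv_one]

theorem strictlyLower_of_isLowerTriangular_inv_one_sub [Fintype n] [DecidableEq n]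
    {B : Matrix n n K} (hB : ∀ i, B i i = 0) (hdet : IsUnit (1 - B).det)
    (h : (1 - B)⁻¹.IsLowerTriangular) : ∀ i j, i ≤ j → B i j = 0 := by
  intro i j hij
  rcases hij.eq_or_lt with rfl | hlt
  · exact hB i
  · have := BlockTriangular.inv h hlt
    rw [nonsing_inv_nonsing_inv _ hdet] at this
    simpa [hlt.ne] using this

theorem strictlyLower_submatrix_of_isLowerTriangular_inv_one_sub_submatrix [Fintype n]
    [DecidableEq n] {A : Matrix n n K} (hA : ∀ i j, i ≤ j → A i j = 0) {e : Equiv.Perm n}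
    (h : ((1 - A)⁻¹.submatrix e e).IsLowerTriangular) :
    ∀ i j, i ≤ j → A.submatrix e e i j = 0 := by
  have hdet : IsUnit (1 - A.submatrix e e).det := by
    rw [← one_sub_submatrix, det_submatrix_equiv_self, det_one_sub hA]
    exact isUnit_one
  rw [inv_one_sub_submatrix] at h
  exact strictlyLower_of_isLowerTriangular_inv_one_sub (fun i => hA _ _ le_rfl) hdet h

end LowerTriangular

noncomputable def signNormalizeCols (W : Matrix n n ℝ) : Matrix n n ℝ :=
  of fun i j => Real.sign (W j j) * W i j

def diagNormalizeRows (W : Matrix n n K) : Matrix n n K :=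
  of fun i j => W i j / W i i

theorem signNormalizeCols_diagonal_mul_mul_diagonal [Fintype n] [DecidableEq n]
    {a b : n → ℝ} {X : Matrix n n ℝ} (hb : ∀ i, b i = 1 ∨ b i = -1) (hX : ∀ i, X i i = 1) :
    signNormalizeCols (diagonal a * X * diagonal b)
      = diagonal a * X * diagonal (fun i => Real.sign (a i)) := by
  ext i j
  rcases hb j with h | h <;>
    simp [signNormalizeCols, diagonal_mul, mul_diagonal, hX, h, Real.sign_neg] <;> ring

theorem diagNormalizeRows_diagonal_mul_mul_diagonal [Fintype n] [DecidableEq n]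
    {a c : n → K} {X : Matrix n n K} (ha : ∀ i, a i ≠ 0) (hX : ∀ i, X i i = 1) :
    diagNormalizeRows (diagonal a * X * diagonal c) = diagonal c⁻¹ * X * diagonal c := by
  ext i j
  simp only [diagNormalizeRows, of_apply, diagonal_mul, mul_diagonal, hX, mul_one, Pi.inv_apply]
  rw [div_mul_eq_div_div, mul_assoc, mul_div_cancel_left₀ _ (ha i), div_eq_inv_mul, mul_assoc]

theorem one_sub_inv_diagNormalizeRows_signNormalizeCols [Fintype n] [DecidableEq n]
    [LinearOrder n] {a b : n → ℝ} {B : Matrix n n ℝ} (ha : ∀ i, a i ≠ 0)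
    (hb : ∀ i, b i = 1 ∨ b i = -1) (hB : ∀ i j, i ≤ j → B i j = 0) :
    1 - (diagNormalizeRows (signNormalizeCols (diagonal a * (1 - B)⁻¹ * diagonal b)))⁻¹
      = diagonal (fun i => Real.sign (a i)) * B * diagonal (fun i => Real.sign (a i)) := by
  have hsign : (fun i => Real.sign (a i))⁻¹ = fun i => Real.sign (a i) :=
    funext fun i => Real.inv_sign (a i)
  rw [signNormalizeCols_diagonal_mul_mul_diagonal hb (inv_one_sub_apply_self hB),
    diagNormalizeRows_diagonal_mul_mul_diagonal ha (inv_one_sub_apply_self hB), hsign,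
    one_sub_inv_diagonal_mul_inv_one_sub_mul_diagonal _ (by simp [det_one_sub hB])]
  intro i
  rcases Real.sign_apply_eq_of_ne_zero _ (ha i) with h | h <;> simp [h]

end Matrix

theorem permMatrix_eq_perm_permMatrix {p : ℕ} (σ : Equiv.Perm (Fin p)) :
    permMatrix σ = σ.permMatrix ℝ := by
  ext i j
  simp [permMatrix, PEquiv.toMatrix_apply, eq_comm]

theorem permMatrix_mul_mul_permMatrix {p : ℕ} (σ τ : Equiv.Perm (Fin p))
    (X : Matrix (Fin p) (Fin p) ℝ) : permMatrix σ * X * permMatrix τ = X.submatrix σ τ.symm := by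
  rw [permMatrix_eq_perm_permMatrix, permMatrix_eq_perm_permMatrix, PEquiv.toMatrix_toPEquiv_mul,
    PEquiv.mul_toMatrix_toPEquiv, submatrix_submatrix]
  rfl

theorem transpose_permMatrix_mul_mul_permMatrix {p : ℕ} (σ : Equiv.Perm (Fin p))
    (X : Matrix (Fin p) (Fin p) ℝ) :
    (permMatrix σ)ᵀ * X * permMatrix σ = X.submatrix ⇑σ⁻¹ ⇑σ⁻¹ := by
  rw [permMatrix_eq_perm_permMatrix, transpose_permMatrix, ← permMatrix_eq_perm_permMatrix,
    ← permMatrix_eq_perm_permMatrix, permMatrix_mul_mul_permMatrix]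
  rfl

theorem stmt6_general (ℓ : ℕ)
    (A : Matrix (Fin ℓ) (Fin ℓ) ℝ)
    (hstrict : ∀ i j : Fin ℓ, i ≤ j → A i j = 0)
    (lam : Fin ℓ → ℝ) (hlam : ∀ i, lam i ≠ 0)
    (d0 : Fin ℓ → ℝ) (hd0 : ∀ i, d0 i = 1 ∨ d0 i = -1)
    (σ1 σ2 ρ1 ρ2 : Equiv.Perm (Fin ℓ))
    (W : Matrix (Fin ℓ) (Fin ℓ) ℝ)
    (hW : W = permMatrix ρ1 *
      (permMatrix σ1 * Matrix.diagonal lam * (1 - A)⁻¹ * Matrix.diagonal d0 *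
        permMatrix σ2) * permMatrix ρ2)
    (hWlower : ∀ i j : Fin ℓ, i < j → W i j = 0)
    (Wt : Matrix (Fin ℓ) (Fin ℓ) ℝ)
    (hWt : Wt = Matrix.of fun i j => Real.sign (W j j) * W i j)
    (W' : Matrix (Fin ℓ) (Fin ℓ) ℝ)
    (hW' : W' = Matrix.of fun i j => Wt i j / Wt i i) :
    ∃ (σ : Equiv.Perm (Fin ℓ)) (d' : Fin ℓ → ℝ),
      (∀ i j : Fin ℓ, A i j ≠ 0 → σ j < σ i) ∧
      (∀ i, d' i = 1 ∨ d' i = -1) ∧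
      1 - W'⁻¹
        = Matrix.diagonal d' * (permMatrix σ)ᵀ * A * permMatrix σ * Matrix.diagonal d' ∧
      ((∀ i, 0 < lam i) → ∀ i, d' i = 1) := by
  have hd0ne : ∀ i, d0 i ≠ 0 := fun i => by rcases hd0 i with h | h <;> simp [h]
  obtain ⟨π, κ, hWπκ⟩ : ∃ π κ : Equiv.Perm (Fin ℓ),
      W = diagonal (lam ∘ π) * (1 - A)⁻¹.submatrix π κ * diagonal (d0 ∘ κ) := by
    refine ⟨ρ1.trans σ1, ρ2.symm.trans σ2.symm, ?_⟩
    have hassoc : permMatrix σ1 * diagonal lam * (1 - A)⁻¹ * diagonal d0 * permMatrix σ2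
        = permMatrix σ1 * (diagonal lam * (1 - A)⁻¹ * diagonal d0) * permMatrix σ2 := by
      simp only [Matrix.mul_assoc]
    rw [hW, hassoc, permMatrix_mul_mul_permMatrix, permMatrix_mul_mul_permMatrix,
      submatrix_submatrix, ← submatrix_diagonal_mul_mul_diagonal]
    rfl
  have hX : ((1 - A)⁻¹.submatrix π κ).IsLowerTriangular :=
    isLowerTriangular_of_diagonal_mul_mul_diagonal (fun _ => hlam _) (fun _ => hd0ne _)
      (hWπκ ▸ fun i j h => hWlower i j h)
  have hMunit : IsUnit (1 - A)⁻¹ :=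
    (isUnit_iff_isUnit_det _).2 (isUnit_nonsing_inv_det _ (by simp [det_one_sub hstrict]))
  obtain rfl : π = κ := IsLowerTriangular.eq_of_isLowerTriangular_submatrix
    (BlockTriangular.inv (isLowerTriangular_one_sub hstrict)) hMunit hX
  have hAπ := strictlyLower_submatrix_of_isLowerTriangular_inv_one_sub_submatrix hstrict hX
  have hsign : ∀ i, Real.sign (lam (π i)) = 1 ∨ Real.sign (lam (π i)) = -1 :=
    fun i => (Real.sign_apply_eq_of_ne_zero _ (hlam _)).symm
  refine ⟨π⁻¹, fun i => Real.sign (lam (π i)), fun i j hAij => ?_, hsign, ?_,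
    fun hpos i => Real.sign_of_pos (hpos _)⟩
  · by_contra hle
    exact hAij (by simpa using hAπ (π⁻¹ i) (π⁻¹ j) (not_lt.1 hle))
  · subst hW' hWt hWπκ
    rw [inv_one_sub_submatrix]
    refine (one_sub_inv_diagNormalizeRows_signNormalizeCols (fun _ => hlam _) (fun _ => hd0 _)
      hAπ).trans ?_
    have hconj : (permMatrix π⁻¹)ᵀ * A * permMatrix π⁻¹ = A.submatrix π π := by
      rw [transpose_permMatrix_mul_mul_permMatrix, inv_inv]
    rw [← hconj]
    simp only [Matrix.mul_assoc]

/-- **Theorem 4.2 (recovery of the shared latent graph).**  Let `A` be strictly lower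
triangular with faithful path support of `(I-A)⁻¹`, `Λ = diagonal lam` invertible,
`D₀ = diagonal d0` a `±1` diagonal matrix, and `B* = Q₁ Λ (I-A)⁻¹ D₀ Q₂`.  If permutation
matrices `R₁, R₂` make `W = R₁ B* R₂` lower triangular, then after the sign normalization of
columns (`W̃`) and scaling of rows (`W'`), one has `I - (W')⁻¹ = D' Q_σᵀ A Q_σ D'` for a
permutation `σ` consistent with the DAG of `A` and a `±1` diagonal `D'`; and `D' = I` when
all diagonal entries of `Λ` are positive. -/
theorem stmt6 (ℓ : ℕ) (hℓ : 1 ≤ ℓ)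
    (A : Matrix (Fin ℓ) (Fin ℓ) ℝ)
    (hstrict : ∀ i j : Fin ℓ, i ≤ j → A i j = 0)
    (hfaith : ∀ i j : Fin ℓ, i ≠ j →
      ((1 - A)⁻¹ i j ≠ 0 ↔ Relation.TransGen (fun a b => A b a ≠ 0) j i))
    (lam : Fin ℓ → ℝ) (hlam : ∀ i, lam i ≠ 0)
    (d0 : Fin ℓ → ℝ) (hd0 : ∀ i, d0 i = 1 ∨ d0 i = -1)
    (σ1 σ2 ρ1 ρ2 : Equiv.Perm (Fin ℓ))
    (W : Matrix (Fin ℓ) (Fin ℓ) ℝ)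
    (hW : W = permMatrix ρ1 *
      (permMatrix σ1 * Matrix.diagonal lam * (1 - A)⁻¹ * Matrix.diagonal d0 *
        permMatrix σ2) * permMatrix ρ2)
    (hWlower : ∀ i j : Fin ℓ, i < j → W i j = 0)
    (Wt : Matrix (Fin ℓ) (Fin ℓ) ℝ)
    (hWt : Wt = Matrix.of fun i j => Real.sign (W j j) * W i j)
    (W' : Matrix (Fin ℓ) (Fin ℓ) ℝ)
    (hW' : W' = Matrix.of fun i j => Wt i j / Wt i i) :
    ∃ (σ : Equiv.Perm (Fin ℓ)) (d' : Fin ℓ → ℝ),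
      (∀ i j : Fin ℓ, A i j ≠ 0 → σ j < σ i) ∧
      (∀ i, d' i = 1 ∨ d' i = -1) ∧
      1 - W'⁻¹
        = Matrix.diagonal d' * (permMatrix σ)ᵀ * A * permMatrix σ * Matrix.diagonal d' ∧
      ((∀ i, 0 < lam i) → ∀ i, d' i = 1) :=
  stmt6_general ℓ A hstrict lam hlam d0 hd0 σ1 σ2 ρ1 ρ2 W hW hWlower Wt hWt W' hW'
end

section
/- For Borel probability measures μ, ν on ℝ, let d_KS(μ, ν) = sup_{x∈ℝ} |F_μ(x) − F_ν(x)| denote the Kolmogorov–Smirnov distance, where F_μ is the cumulative distribution function of μ. Let P, P', P̂, P̂' be Borel probability measures on ℝ, let n_min, n_max, n_e, n_f be positive integers with n_min ≤ n_e ≤ n_max and n_min ≤ n_f ≤ n_max, and let c ≥ 0, κ ≥ 0 be reals. If sqrt(n_e n_f / (n_e + n_f)) · d_KS(P̂, P̂') ≤ c and d_KS(P, P') ≥ κ, then d_KS(P̂, P) ≥ κ/2 − sqrt(n_max) c / (sqrt(2) n_min) or d_KS(P̂', P') ≥ κ/2 − sqrt(n_max) c / (sqrt(2) n_min). -/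
/-!
The true measures are `κ`-separated, so by the triangle inequality
`κ ≤ d(P, P̂) + d(P̂, P̂') + d(P̂', P')`, and one of the two estimation errors is at least
`(κ - d(P̂, P̂')) / 2`. A small two-sample statistic bounds `d(P̂, P̂')`, because the
sample-size factor `√(n_e n_f / (n_e + n_f))` is at least `n_min / √(2 n_max)`.
-/

open MeasureTheory ProbabilityTheory

/-- The Kolmogorov–Smirnov distance between two Borel probability measures on `ℝ`:
the sup-norm distance of their cumulative distribution functions. -/
noncomputable def dKS (μ ν : Measure ℝ) : ℝ :=
  ⨆ x : ℝ, |cdf μ x - cdf ν x|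

lemma bddAbove_range_abs_cdf_sub_cdf (μ ν : Measure ℝ) :
    BddAbove (Set.range fun x => |cdf μ x - cdf ν x|) := by
  refine ⟨1, ?_⟩
  rintro _ ⟨x, rfl⟩
  rw [abs_sub_le_iff]
  constructor <;> linarith [cdf_nonneg μ x, cdf_le_one μ x, cdf_nonneg ν x, cdf_le_one ν x]

lemma abs_cdf_sub_cdf_le_dKS (μ ν : Measure ℝ) (x : ℝ) : |cdf μ x - cdf ν x| ≤ dKS μ ν :=
  le_ciSup (bddAbove_range_abs_cdf_sub_cdf μ ν) x

lemma dKS_nonneg (μ ν : Measure ℝ) : 0 ≤ dKS μ ν :=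
  (abs_nonneg _).trans (abs_cdf_sub_cdf_le_dKS μ ν 0)

lemma dKS_comm (μ ν : Measure ℝ) : dKS μ ν = dKS ν μ := by
  simp only [dKS, abs_sub_comm]

lemma dKS_triangle (μ ρ ν : Measure ℝ) : dKS μ ν ≤ dKS μ ρ + dKS ρ ν :=
  ciSup_le fun x =>
    (abs_sub_le _ (cdf ρ x) _).trans
      (add_le_add (abs_cdf_sub_cdf_le_dKS μ ρ x) (abs_cdf_sub_cdf_le_dKS ρ ν x))

lemma le_dKS_or_le_dKS_of_dKS_le {P P' Q Q' : Measure ℝ} {κ δ : ℝ}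
    (hQ : dKS Q Q' ≤ 2 * δ) (hP : κ ≤ dKS P P') :
    κ / 2 - δ ≤ dKS Q P ∨ κ / 2 - δ ≤ dKS Q' P' := by
  have := (dKS_triangle P Q P').trans (add_le_add_right (dKS_triangle Q Q' P') _)
  rw [dKS_comm P Q] at this
  by_contra! h
  linarith [h.1, h.2]

lemma sq_div_two_mul_le_mul_div_add {a b x y : ℝ} (ha : 0 < a)
    (hax : a ≤ x) (hxb : x ≤ b) (hay : a ≤ y) (hyb : y ≤ b) :
    a ^ 2 / (2 * b) ≤ x * y / (x + y) := by
  have hxy : a ^ 2 ≤ x * y := by nlinarith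
  rw [div_le_div_iff₀ (by linarith) (by linarith)]
  calc a ^ 2 * (x + y) ≤ x * y * (x + y) := by gcongr; linarith
    _ ≤ x * y * (2 * b) := by gcongr <;> nlinarith

lemma le_of_sqrt_mul_div_add_mul_le {a b x y c d : ℝ} (ha : 0 < a)
    (hax : a ≤ x) (hxb : x ≤ b) (hay : a ≤ y) (hyb : y ≤ b) (hd : 0 ≤ d)
    (h : √(x * y / (x + y)) * d ≤ c) :
    d ≤ 2 * (√b * c / (√2 * a)) := by
  have hb : 0 < b := ha.trans_le (hax.trans hxb)
  have hfactor : a / √(2 * b) ≤ √(x * y / (x + y)) := by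
    rw [← Real.sqrt_sq ha.le, ← Real.sqrt_div' _ (by positivity)]
    exact Real.sqrt_le_sqrt (sq_div_two_mul_le_mul_div_add ha hax hxb hay hyb)
  have had : a * d ≤ √2 * √b * c := by
    have := (mul_le_mul_of_nonneg_right hfactor hd).trans h
    rwa [Real.sqrt_mul zero_le_two, div_mul_eq_mul_div, div_le_iff₀ (by positivity),
      mul_comm c] at this
  have hrhs : 2 * (√b * c / (√2 * a)) = √2 * √b * c / a := by
    field_simp
    rw [Real.sq_sqrt zero_le_two]
    ring
  rwa [hrhs, le_div_iff₀ ha, mul_comm]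

theorem stmt12_general (P P' Phat Phat' : Measure ℝ)
    (nmin nmax nE nF : ℕ)
    (hmin : 0 < nmin) (hE1 : nmin ≤ nE) (hE2 : nE ≤ nmax)
    (hF1 : nmin ≤ nF) (hF2 : nF ≤ nmax)
    (c κ : ℝ)
    (hstat : Real.sqrt ((nE * nF : ℝ) / (nE + nF)) * dKS Phat Phat' ≤ c)
    (hsep : κ ≤ dKS P P') :
    κ / 2 - Real.sqrt nmax * c / (Real.sqrt 2 * nmin) ≤ dKS Phat P ∨
    κ / 2 - Real.sqrt nmax * c / (Real.sqrt 2 * nmin) ≤ dKS Phat' P' := by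
  refine le_dKS_or_le_dKS_of_dKS_le ?_ hsep
  exact le_of_sqrt_mul_div_add_mul_le (by exact_mod_cast hmin) (by exact_mod_cast hE1)
    (by exact_mod_cast hE2) (by exact_mod_cast hF1) (by exact_mod_cast hF2)
    (dKS_nonneg _ _) hstat

/-- **Key deterministic inequality in the proof of Theorem C.1 (false discovery bound).**
If the two-sample Kolmogorov–Smirnov statistic between the estimates `P̂, P̂'` is at most `c`
while the true measures `P, P'` are `κ`-separated in KS distance, then at least one of the
estimation errors is at least `κ/2 − √(n_max) c / (√2 n_min)`. -/
theorem stmt12 (P P' Phat Phat' : Measure ℝ)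
    [IsProbabilityMeasure P] [IsProbabilityMeasure P']
    [IsProbabilityMeasure Phat] [IsProbabilityMeasure Phat']
    (nmin nmax nE nF : ℕ)
    (hmin : 0 < nmin) (hE1 : nmin ≤ nE) (hE2 : nE ≤ nmax)
    (hF1 : nmin ≤ nF) (hF2 : nF ≤ nmax)
    (c κ : ℝ) (hc : 0 ≤ c) (hκ : 0 ≤ κ)
    (hstat : Real.sqrt ((nE * nF : ℝ) / (nE + nF)) * dKS Phat Phat' ≤ c)
    (hsep : κ ≤ dKS P P') :
    κ / 2 - Real.sqrt nmax * c / (Real.sqrt 2 * nmin) ≤ dKS Phat P ∨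
    κ / 2 - Real.sqrt nmax * c / (Real.sqrt 2 * nmin) ≤ dKS Phat' P' :=
  stmt12_general P P' Phat Phat' nmin nmax nE nF hmin hE1 hE2 hF1 hF2 c κ hstat hsep
end
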